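/- For every function δ₀ : ℝ → ℝ mapping (0,2] into (0,1] and every ε ∈ (0,2], there exists a constant r₀ with 0 ≤ r₀ < 1 such that: for every real Banach space E for which δ₀ is a modulus of uniform convexity, every pair of invertible linear isometries S, T of E with TS = ST, and every ξ ∈ E with ‖ξ − Sξ‖ ≥ ε·‖ξ‖, one has (1/2)·‖(ξ + Tξ)/2‖ + (1/2)·‖(ξ + T(Sξ))/2‖ ≤ r₀·‖ξ‖. -/
import Mathlib


/-- `δ : ℝ → ℝ` is a *modulus of uniform convexity* for `E`: it maps `(0,2]` into `(0,1]` and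
for every `ε ∈ (0,2]` and all unit vectors `ξ, η` with `‖ξ - η‖ ≥ ε` one has
`‖(ξ + η)/2‖ ≤ 1 - δ ε`. -/
def IsUCModulus (E : Type*) [NormedAddCommGroup E] [NormedSpace ℝ E] (δ : ℝ → ℝ) : Prop :=
  (∀ ε : ℝ, 0 < ε → ε ≤ 2 → 0 < δ ε ∧ δ ε ≤ 1) ∧
    ∀ ε : ℝ, 0 < ε → ε ≤ 2 → ∀ ξ η : E, ‖ξ‖ = 1 → ‖η‖ = 1 → ε ≤ ‖ξ - η‖ →
      ‖(2⁻¹ : ℝ) • (ξ + η)‖ ≤ 1 - δ ε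

/-- For every `δ₀ : ℝ → ℝ` mapping `(0,2]` into `(0,1]` and every `ε ∈ (0,2]`, there is
`0 ≤ r₀ < 1` such that for every real Banach space `E` with modulus of uniform convexity `δ₀`,
every pair of commuting invertible linear isometries `S, T` of `E`, and every `ξ` with
`‖ξ - Sξ‖ ≥ ε‖ξ‖`, one has `(1/2)‖(ξ + Tξ)/2‖ + (1/2)‖(ξ + TSξ)/2‖ ≤ r₀‖ξ‖`. -/
theorem uniformly_convex_averaging_inequality_uniform.{u}
    (δ₀ : ℝ → ℝ) (hδ₀ : ∀ ε : ℝ, 0 < ε → ε ≤ 2 → 0 < δ₀ ε ∧ δ₀ ε ≤ 1)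
    (ε : ℝ) (hε0 : 0 < ε) (hε2 : ε ≤ 2) :
    ∃ r₀ : ℝ, 0 ≤ r₀ ∧ r₀ < 1 ∧
      ∀ (E : Type u) [NormedAddCommGroup E] [NormedSpace ℝ E] [CompleteSpace E],
        IsUCModulus E δ₀ →
          ∀ S T : E ≃ₗᵢ[ℝ] E, (∀ ξ : E, T (S ξ) = S (T ξ)) →
            ∀ ξ : E, ε * ‖ξ‖ ≤ ‖ξ - S ξ‖ →
              2⁻¹ * ‖(2⁻¹ : ℝ) • (ξ + T ξ)‖ + 2⁻¹ * ‖(2⁻¹ : ℝ) • (ξ + T (S ξ))‖ ≤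
                r₀ * ‖ξ‖ := by
  obtain ⟨hδpos, hδle⟩ := hδ₀ (ε / 2) (by linarith) (by linarith)
  refine ⟨1 - δ₀ (ε / 2) / 2, by linarith, by linarith, ?_⟩
  intro E _ _ _ hUC S T _hcomm ξ hξ
  by_cases hξ0 : ξ = 0
  · simp [hξ0]
  have hn : 0 < ‖ξ‖ := norm_pos_iff.mpr hξ0
  -- scaled uniform convexity
  have key : ∀ η : E, ‖η‖ = ‖ξ‖ → (ε / 2) * ‖ξ‖ ≤ ‖ξ - η‖ →
      ‖(2⁻¹ : ℝ) • (ξ + η)‖ ≤ (1 - δ₀ (ε / 2)) * ‖ξ‖ := by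
    intro η hη hd
    have hinv : (0:ℝ) < ‖ξ‖⁻¹ := inv_pos.mpr hn
    have h1 : ‖(‖ξ‖⁻¹ : ℝ) • ξ‖ = 1 := by
      rw [norm_smul, Real.norm_eq_abs, abs_of_pos hinv, inv_mul_cancel₀ hn.ne']
    have h2 : ‖(‖ξ‖⁻¹ : ℝ) • η‖ = 1 := by
      rw [norm_smul, Real.norm_eq_abs, abs_of_pos hinv, hη, inv_mul_cancel₀ hn.ne']
    have h3 : ε / 2 ≤ ‖(‖ξ‖⁻¹ : ℝ) • ξ - (‖ξ‖⁻¹ : ℝ) • η‖ := by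
      rw [← smul_sub, norm_smul, Real.norm_eq_abs, abs_of_pos hinv]
      calc ε / 2 = (ε / 2 * ‖ξ‖) * ‖ξ‖⁻¹ := by field_simp
        _ ≤ ‖ξ - η‖ * ‖ξ‖⁻¹ := mul_le_mul_of_nonneg_right hd hinv.le
        _ = ‖ξ‖⁻¹ * ‖ξ - η‖ := mul_comm _ _
    have := hUC.2 (ε / 2) (by linarith) (by linarith) _ _ h1 h2 h3
    have heq : ‖(2⁻¹ : ℝ) • ((‖ξ‖⁻¹ : ℝ) • ξ + (‖ξ‖⁻¹ : ℝ) • η)‖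
        = ‖ξ‖⁻¹ * ‖(2⁻¹ : ℝ) • (ξ + η)‖ := by
      rw [← smul_add, smul_comm, norm_smul, Real.norm_eq_abs, abs_of_pos hinv]
    rw [heq] at this
    calc ‖(2⁻¹ : ℝ) • (ξ + η)‖ = (‖ξ‖⁻¹ * ‖(2⁻¹ : ℝ) • (ξ + η)‖) * ‖ξ‖ := by
          field_simp
      _ ≤ (1 - δ₀ (ε / 2)) * ‖ξ‖ := by
          apply mul_le_mul_of_nonneg_right this hn.le
  have hTn : ‖T ξ‖ = ‖ξ‖ := T.norm_map ξ
  have hTSn : ‖T (S ξ)‖ = ‖ξ‖ := by rw [T.norm_map, S.norm_map]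
  have hdiff : ε * ‖ξ‖ ≤ ‖T ξ - T (S ξ)‖ := by
    rw [← map_sub, T.norm_map]; exact hξ
  have hb_triv : ∀ η : E, ‖η‖ = ‖ξ‖ → ‖(2⁻¹ : ℝ) • (ξ + η)‖ ≤ ‖ξ‖ := by
    intro η hη
    rw [norm_smul, Real.norm_eq_abs]
    have := norm_add_le ξ η
    rw [hη] at this
    rw [abs_of_pos (by norm_num : (0:ℝ) < 2⁻¹)]
    linarith
  by_cases hc : (ε / 2) * ‖ξ‖ ≤ ‖ξ - T ξ‖
  · have ha := key (T ξ) hTn hc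
    have hb := hb_triv (T (S ξ)) hTSn
    nlinarith [hδpos, hn]
  · push_neg at hc
    have hc' : (ε / 2) * ‖ξ‖ ≤ ‖ξ - T (S ξ)‖ := by
      have htri : ‖T ξ - T (S ξ)‖ ≤ ‖T ξ - ξ‖ + ‖ξ - T (S ξ)‖ := norm_sub_le_norm_sub_add_norm_sub _ _ _
      have : ‖T ξ - ξ‖ = ‖ξ - T ξ‖ := norm_sub_rev _ _
      nlinarith
    have ha := key (T (S ξ)) hTSn hc'
    have hb := hb_triv (T ξ) hTn
    nlinarith [hδpos, hn]
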